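/- Let H = {x ∈ ℝ³ : ⟨x - O, p - O⟩ ≥ 0} be the closed hemisphere of the ball B(O, r) facing a point p with ‖p - O‖ > r. Then every point of the sphere {x : ‖x - O‖ = r} visible from p (i.e., such that the open segment from p to x does not meet the open ball) lies in H. -/

import Mathlib

/-!
Near `x` the segment from `x` towards `p` is `x - O + s • (p - x)` with `s → 0⁺`, whose squared
norm is `r ^ 2 + 2 s ⟪x - O, p - x⟫ + s ^ 2 ‖p - x‖ ^ 2`. Staying outside the open ball forces
`⟪x - O, p - x⟫ ≥ 0`, and `⟪x - O, p - O⟫ = ⟪x - O, p - x⟫ + r ^ 2`.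
-/

open RealInnerProductSpace Set Filter Topology

theorem inner_nonneg_of_norm_le_norm_add_smul {E : Type*} [NormedAddCommGroup E]
    [InnerProductSpace ℝ E] {u w : E} (h : ∀ s ∈ Ioo (0 : ℝ) 1, ‖u‖ ≤ ‖u + s • w‖) :
    0 ≤ ⟪u, w⟫ := by
  have diffQuot_nonneg : ∀ s ∈ Ioo (0 : ℝ) 1, 0 ≤ 2 * ⟪u, w⟫ + s * ‖w‖ ^ 2 := by
    rintro s ⟨hs₀, hs₁⟩
    have hsq : ‖u‖ ^ 2 ≤ ‖u + s • w‖ ^ 2 := by gcongr; exact h s ⟨hs₀, hs₁⟩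
    rw [norm_add_sq_real, real_inner_smul_right, norm_smul, Real.norm_of_nonneg hs₀.le] at hsq
    nlinarith
  have hlim : Tendsto (fun s : ℝ ↦ 2 * ⟪u, w⟫ + s * ‖w‖ ^ 2) (𝓝[>] 0) (𝓝 (2 * ⟪u, w⟫)) := by
    refine tendsto_nhdsWithin_of_tendsto_nhds ?_
    simpa using ((tendsto_id (x := 𝓝 (0 : ℝ))).mul_const (‖w‖ ^ 2)).const_add (2 * ⟪u, w⟫)
  have htwice : 0 ≤ 2 * ⟪u, w⟫ :=
    ge_of_tendsto hlim (eventually_of_mem (Ioo_mem_nhdsGT one_pos) diffQuot_nonneg)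
  linarith

theorem visible_points_in_facing_hemisphere_general (O p x : EuclideanSpace ℝ (Fin 3)) (r : ℝ)
    (hx : ‖x - O‖ = r)
    (hvis : ∀ t : ℝ, t ∈ Set.Ioo (0 : ℝ) 1 → r ≤ ‖(p + t • (x - p)) - O‖) :
    0 ≤ ⟪x - O, p - O⟫ := by
  have hmin : ∀ s ∈ Ioo (0 : ℝ) 1, ‖x - O‖ ≤ ‖(x - O) + s • (p - x)‖ := by
    rintro s ⟨hs₀, hs₁⟩
    have hpt : p + (1 - s) • (x - p) - O = (x - O) + s • (p - x) := by
      rw [sub_smul, one_smul, smul_sub, smul_sub]; abel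
    rw [hx, ← hpt]
    exact hvis (1 - s) ⟨by linarith, by linarith⟩
  have hsplit : ⟪x - O, p - O⟫ = ⟪x - O, p - x⟫ + ‖x - O‖ ^ 2 := by
    rw [← real_inner_self_eq_norm_sq, ← inner_add_right, sub_add_sub_cancel]
  rw [hsplit]
  exact add_nonneg (inner_nonneg_of_norm_le_norm_add_smul hmin) (sq_nonneg _)

theorem visible_points_in_facing_hemisphere (O p x : EuclideanSpace ℝ (Fin 3)) (r : ℝ)
    (hr : 0 < r) (hp : r < ‖p - O‖) (hx : ‖x - O‖ = r)
    (hvis : ∀ t : ℝ, t ∈ Set.Ioo (0 : ℝ) 1 → r ≤ ‖(p + t • (x - p)) - O‖) :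
    0 ≤ ⟪x - O, p - O⟫ :=
  visible_points_in_facing_hemisphere_general O p x r hx hvis
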